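/- Let S be a signed graph with n×n adjacency matrix A₀ whose eigenvalues, listed with multiplicity, are θ₁,…,θ_n, let p, q ≥ 1, and let B = [[0_p, J_{p×q}],[J_{q×p}, 0_q]] be the adjacency matrix of (K_{p,q},+). Let A be the adjacency matrix of S ⋆ₛ (K_{p,q},+). Then for every real t such that tI_{p+q} − B is invertible, det(tI_{n(p+q+1)} − A) = t^{n(p+q−2)} · ∏_{i=1}^{n} ((t² − pq)(t − θᵢ) − ((p+q)t + 2pq)θᵢ²). -/

import Mathlib

/-!
Take the Schur complement of `tI − A` with respect to its invertible block `(tI − B) ⊗ I`: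
since `(jᵀ ⊗ A₀)(N ⊗ I)(j ⊗ A₀) = (jᵀ N j) A₀²`, it gives
`det(tI − A) = det(tI − B)ⁿ · det(tI − A₀ − χ_B(t) A₀²)` for the coronal `χ_B(t) = jᵀ(tI − B)⁻¹j`,
and diagonalising `A₀` turns the second factor into `∏ᵢ (t − θᵢ − χ_B(t) θᵢ²)`.
For `B = A(K_{p,q},+)`, which factors as `UW` with `WU = [[0, q], [p, 0]]`, comparing the
characteristic polynomials of `UW` and `WU` gives `det(tI − B) = t^{p+q−2}(t² − pq)`, and
`(tI − B) x = (t² − pq) j` for the vector `x` equal to `t + q` on the first side and `t + p` on the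
second, so that `χ_B(t) = ((p + q)t + 2pq)/(t² − pq)`.
-/

open Matrix BigOperators Kronecker

/-- A signed graph on vertex set `V` is represented by its adjacency matrix: a real symmetric
matrix with zero diagonal and all entries in `{-1, 0, 1}`. -/
def IsSignedAdj {V : Type*} (A : Matrix V V ℝ) : Prop :=
  A.IsHermitian ∧ (∀ i, A i i = 0) ∧ ∀ i j, A i j = -1 ∨ A i j = 0 ∨ A i j = 1

/-- The adjacency matrix of the s-neighbourhood corona `S₁ ⋆ₛ S₂`:
the block matrix `[[A₁, jᵀ ⊗ A₁], [(jᵀ ⊗ A₁)ᵀ, A₂ ⊗ I]]`, indexed by `Fin n₁ ⊕ (V × Fin n₁)`. -/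
def coronaAdj {n₁ : ℕ} {V : Type*} [DecidableEq V]
    (A₁ : Matrix (Fin n₁) (Fin n₁) ℝ) (A₂ : Matrix V V ℝ) :
    Matrix (Fin n₁ ⊕ V × Fin n₁) (Fin n₁ ⊕ V × Fin n₁) ℝ :=
  Matrix.fromBlocks A₁ (Matrix.of fun i p => A₁ i p.2) (Matrix.of fun p j => A₁ p.2 j)
    (A₂ ⊗ₖ (1 : Matrix (Fin n₁) (Fin n₁) ℝ))

/-- The adjacency matrix of `(K_{p,q}, +)`, the all-positive complete bipartite signed graph:
the block matrix `[[0, J], [J, 0]]`. -/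
def posKpq (p q : ℕ) : Matrix (Fin p ⊕ Fin q) (Fin p ⊕ Fin q) ℝ :=
  Matrix.fromBlocks 0 (Matrix.of fun _ _ => 1) (Matrix.of fun _ _ => 1) 0

theorem sum_sum_inv_mul_eq_sum {V R : Type*} [Fintype V] [DecidableEq V] [CommRing R]
    {M : Matrix V V R} (hM : IsUnit M.det) {x : V → R} {c : R} (hx : M *ᵥ x = fun _ => c) :
    (∑ v, ∑ w, M⁻¹ v w) * c = ∑ v, x v := by
  have : M⁻¹ *ᵥ (fun _ => c) = x := by
    rw [← hx, mulVec_mulVec, nonsing_inv_mul _ hM, one_mulVec]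
  simp [← this, mulVec, dotProduct, Finset.sum_mul]

theorem Matrix.IsHermitian.det_smul_one_sub_sub_smul_mul_self {m 𝕜 : Type*} [Fintype m]
    [DecidableEq m] [RCLike 𝕜] {A : Matrix m m 𝕜} (hA : A.IsHermitian) (t s : 𝕜) :
    (t • 1 - A - s • (A * A)).det = ∏ i, (t - hA.eigenvalues i - s * hA.eigenvalues i ^ 2) := by
  let D : Matrix m m 𝕜 := diagonal (RCLike.ofReal ∘ hA.eigenvalues)
  have hconj : t • 1 - A - s • (A * A)
      = Unitary.conjStarAlgAut 𝕜 _ hA.eigenvectorUnitary (t • 1 - D - s • (D * D)) := by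
    conv_lhs => rw [hA.spectral_theorem]
    simp only [map_sub, map_smul, map_mul, map_one, D]
  have hdiag : t • 1 - D - s • (D * D)
      = diagonal fun i => t - hA.eigenvalues i - s * hA.eigenvalues i ^ 2 := by
    ext i j
    rcases eq_or_ne i j with rfl | hij <;> simp [D, diagonal_mul_diagonal, sq, *]
  rw [hconj, Unitary.conjStarAlgAut_apply, det_mul, det_mul, mul_comm, ← mul_assoc, ← det_mul,
    Unitary.coe_star_mul_self, det_one, one_mul, hdiag, det_diagonal]

theorem submatrix_snd_mul_kronecker_one_mul {n : ℕ} {V R : Type*} [Fintype V] [CommSemiring R]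
    (A : Matrix (Fin n) (Fin n) R) (N : Matrix V V R) :
    (A.submatrix id Prod.snd : Matrix (Fin n) (V × Fin n) R) *
        (N ⊗ₖ (1 : Matrix (Fin n) (Fin n) R)) * (A.submatrix Prod.snd id : Matrix (V × Fin n) (Fin n) R)
      = (∑ v, ∑ w, N v w) • (A * A) := by
  ext i j
  simp only [mul_apply, submatrix_apply, kroneckerMap_apply, one_apply, Fintype.sum_prod_type,
    Matrix.smul_apply, id, mul_ite, mul_one, mul_zero, Finset.sum_ite_eq',
    Finset.mem_univ, if_true, smul_eq_mul, Finset.sum_mul, Finset.mul_sum]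
  rw [Finset.sum_comm]
  refine Finset.sum_congr rfl fun k _ => ?_
  rw [Finset.sum_comm]
  exact Finset.sum_congr rfl fun _ _ => Finset.sum_congr rfl fun _ _ => by ring

/-- The coronal `χ_M(t) = jᵀ (tI - M)⁻¹ j`; it is `0` when `tI - M` is singular. -/
noncomputable def coronal {V : Type*} [Fintype V] [DecidableEq V] (M : Matrix V V ℝ) (t : ℝ) : ℝ :=
  ∑ v, ∑ w, (t • (1 : Matrix V V ℝ) - M)⁻¹ v w

theorem smul_one_sub_coronaAdj {n : ℕ} {V : Type*} [DecidableEq V]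
    (A₁ : Matrix (Fin n) (Fin n) ℝ) (A₂ : Matrix V V ℝ) (t : ℝ) :
    t • 1 - coronaAdj A₁ A₂ =
      fromBlocks (t • 1 - A₁) (-A₁.submatrix id Prod.snd) (-A₁.submatrix Prod.snd id)
        ((t • 1 - A₂) ⊗ₖ 1) := by
  ext (i | ⟨v, k⟩) (j | ⟨w, l⟩)
  case inr.inr => by_cases hkl : k = l <;> simp [coronaAdj, one_apply, hkl]
  all_goals simp [coronaAdj, one_apply]

theorem det_smul_one_sub_coronaAdj {n : ℕ} {V : Type*} [Fintype V] [DecidableEq V]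
    (A₁ : Matrix (Fin n) (Fin n) ℝ) {A₂ : Matrix V V ℝ} {t : ℝ} (h : IsUnit (t • 1 - A₂).det) :
    (t • 1 - coronaAdj A₁ A₂).det
      = (t • 1 - A₂).det ^ n * (t • 1 - A₁ - coronal A₂ t • (A₁ * A₁)).det := by
  have hdet : ((t • 1 - A₂) ⊗ₖ (1 : Matrix (Fin n) (Fin n) ℝ)).det = (t • 1 - A₂).det ^ n := by
    simp [det_kronecker]
  have := invertibleOfIsUnitDet _ (hdet ▸ h.pow n)
  rw [smul_one_sub_coronaAdj, det_fromBlocks₂₂, hdet, invOf_eq_nonsing_inv, inv_kronecker, inv_one,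
    Matrix.mul_neg, Matrix.neg_mul, Matrix.neg_mul, neg_neg, submatrix_snd_mul_kronecker_one_mul,
    coronal]

open Polynomial in
theorem charpoly_posKpq {p q : ℕ} (h : 2 ≤ p + q) :
    (posKpq p q).charpoly = X ^ (p + q - 2) * (X ^ 2 - C ((p : ℝ) * q)) := by
  let U : Matrix (Fin p ⊕ Fin q) (Fin 2) ℝ := of (Sum.elim (fun _ => ![1, 0]) (fun _ => ![0, 1]))
  let W : Matrix (Fin 2) (Fin p ⊕ Fin q) ℝ := of ![Sum.elim 0 1, Sum.elim 1 0]
  have hUW : posKpq p q = U * W := by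
    ext (i | i) (j | j) <;> simp [posKpq, U, W, mul_apply, Fin.sum_univ_two]
  have hWU : W * U = !![0, (q : ℝ); p, 0] := by
    ext k l
    fin_cases k <;> fin_cases l <;> simp [U, W, mul_apply, Fintype.sum_sum_type]
  rw [hUW, charpoly_mul_comm_of_le _ _ (by simpa using h), hWU, charpoly_fin_two, trace_fin_two_of,
    det_fin_two_of, Fintype.card_sum, Fintype.card_fin, Fintype.card_fin, Fintype.card_fin]
  simp only [add_zero, mul_zero, zero_sub, map_zero, map_neg, zero_mul, sub_zero, ← sub_eq_add_neg,
    mul_comm (q : ℝ)]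

theorem det_smul_one_sub_posKpq {p q : ℕ} (h : 2 ≤ p + q) (t : ℝ) :
    (t • (1 : Matrix (Fin p ⊕ Fin q) (Fin p ⊕ Fin q) ℝ) - posKpq p q).det
      = t ^ (p + q - 2) * (t ^ 2 - p * q) := by
  rw [smul_one_eq_diagonal, ← scalar_apply, ← eval_charpoly, charpoly_posKpq h]
  simp

theorem posKpq_mulVec_sumElim (p q : ℕ) (a b : ℝ) :
    posKpq p q *ᵥ Sum.elim (fun _ => a) (fun _ => b)
      = Sum.elim (fun _ => q * b) (fun _ => p * a) := by
  ext (i | i) <;> simp [posKpq, mulVec, dotProduct]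

theorem coronal_posKpq_mul {p q : ℕ} {t : ℝ}
    (hinv : IsUnit (t • (1 : Matrix (Fin p ⊕ Fin q) (Fin p ⊕ Fin q) ℝ) - posKpq p q).det) :
    coronal (posKpq p q) t * (t ^ 2 - p * q) = (p + q) * t + 2 * p * q := by
  have hx : (t • 1 - posKpq p q) *ᵥ Sum.elim (fun _ => t + q) (fun _ => t + p)
      = fun _ => t ^ 2 - p * q := by
    rw [sub_mulVec, smul_mulVec, one_mulVec, posKpq_mulVec_sumElim]
    ext (i | i) <;> simp only [Pi.sub_apply, Pi.smul_apply, Sum.elim_inl, Sum.elim_inr,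
      smul_eq_mul] <;> ring
  rw [coronal, sum_sum_inv_mul_eq_sum hinv hx, Fintype.sum_sum_type]
  simp only [Sum.elim_inl, Sum.elim_inr, Finset.sum_const, Finset.card_univ, Fintype.card_fin,
    nsmul_eq_mul]
  ring

/-- Let `S` be a signed graph on `n` vertices with eigenvalues `θ₁, …, θ_n` (with multiplicity)
and let `p, q ≥ 1`.  For every real `t` with `tI − A(K_{p,q},+)` invertible, the adjacency
matrix `A` of `S ⋆ₛ (K_{p,q},+)` satisfies
`det(tI − A) = t^{n(p+q−2)} · ∏ᵢ ((t² − pq)(t − θᵢ) − ((p+q)t + 2pq)θᵢ²)`. -/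
theorem det_corona_posKpq {n p q : ℕ}
    (A₀ : Matrix (Fin n) (Fin n) ℝ) (h₀ : IsSignedAdj A₀)
    (hp : 1 ≤ p) (hq : 1 ≤ q) (t : ℝ)
    (hinv : IsUnit (t • (1 : Matrix (Fin p ⊕ Fin q) (Fin p ⊕ Fin q) ℝ) - posKpq p q).det) :
    (t • (1 : Matrix (Fin n ⊕ (Fin p ⊕ Fin q) × Fin n)
          (Fin n ⊕ (Fin p ⊕ Fin q) × Fin n) ℝ) - coronaAdj A₀ (posKpq p q)).det
      = t ^ (n * (p + q - 2)) *
        ∏ i, ((t ^ 2 - (p : ℝ) * q) * (t - h₀.1.eigenvalues i)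
            - (((p : ℝ) + q) * t + 2 * p * q) * (h₀.1.eigenvalues i) ^ 2) := by
  have hdet := det_smul_one_sub_posKpq (by omega : 2 ≤ p + q) t
  have hne : t ^ 2 - (p : ℝ) * q ≠ 0 := by
    intro h
    exact hinv.ne_zero (by rw [hdet, h, mul_zero])
  have hχ : coronal (posKpq p q) t = ((p + q) * t + 2 * p * q) / (t ^ 2 - p * q) := by
    rw [eq_div_iff hne, coronal_posKpq_mul hinv]
  rw [det_smul_one_sub_coronaAdj _ hinv, h₀.1.det_smul_one_sub_sub_smul_mul_self, hdet, hχ,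
    mul_pow, ← pow_mul, mul_comm (p + q - 2), mul_assoc, ← Fin.prod_const n (t ^ 2 - _),
    ← Finset.prod_mul_distrib]
  congr 1
  refine Finset.prod_congr rfl fun i _ => ?_
  rw [RCLike.ofReal_real_eq_id, id]
  field_simp
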